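/- Let (S, f, s₀) be an FSM over Bool in which every state is reachable from s₀. Then for every disjunctive sequence X : ℕ → Bool, the set I(X) of states visited infinitely often by the run of X equals some leaf connected component: there is a leaf connected component g with I(X) = g. -/
import Mathlib


open MeasureTheory Filter

/-- The fair-coin product probability measure on Cantor space `ℕ → Bool`,
constructed as the pushforward of Lebesgue measure on `[0,1)` under binary expansion. -/
noncomputable def mu : Measure (ℕ → Bool) :=
  Measure.map (fun x n => decide (⌊x * 2 ^ (n + 1)⌋ % 2 = 1))
    (volume.restrict (Set.Ico (0 : ℝ) 1))

/-- Action of a word on a state of an automaton. -/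
def act {S A : Type*} (f : S → A → S) (s : S) (w : List A) : S := w.foldl f s

/-- The run of a sequence `X` on the machine `(S, f, s₀)`. -/
def run {S : Type*} (f : S → Bool → S) (s₀ : S) (X : ℕ → Bool) : ℕ → S
  | 0 => s₀
  | n + 1 => f (run f s₀ X n) (X n)

/-- `t` is reachable from `s`. -/
def Reach {S : Type*} (f : S → Bool → S) (s t : S) : Prop := ∃ w : List Bool, act f s w = t

/-- The connected component of a state `s`. -/
def component {S : Type*} (f : S → Bool → S) (s : S) : Set S :=
  {t | Reach f s t ∧ Reach f t s}

/-- `g` is a leaf connected component. -/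
def IsLeafComponent {S : Type*} (f : S → Bool → S) (g : Set S) : Prop :=
  (∃ s, g = component f s) ∧ ∀ s ∈ g, ∀ t, Reach f s t → Reach f t s

/-- The word `w` occurs as a subword of the sequence `X`. -/
def Occurs (w : List Bool) (X : ℕ → Bool) : Prop :=
  ∃ n, ∀ k < w.length, X (n + k) = w.getD k false

/-- `X` is disjunctive: every word occurs in `X` as a subword. -/
def Disjunctive (X : ℕ → Bool) : Prop := ∀ w : List Bool, Occurs w X

/-- The word `w` is a prefix of the sequence `X`. -/
def IsPrefixOfSeq (w : List Bool) (X : ℕ → Bool) : Prop :=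
  ∀ k < w.length, X k = w.getD k false

/-- `[L]`: the set of sequences having some prefix in the language `L`. -/
def cyl (L : Set (List Bool)) : Set (ℕ → Bool) := {X | ∃ w ∈ L, IsPrefixOfSeq w X}

/-- `I(X)`: the set of states visited infinitely often by the run of `X`. -/
def InfOcc {S : Type*} (f : S → Bool → S) (s₀ : S) (X : ℕ → Bool) : Set S :=
  {s | ∃ᶠ n in atTop, run f s₀ X n = s}

/-- `X` is accepted by the deterministic Büchi automaton `(S, f, s₀, F)`. -/
def BuchiAccepts {S : Type*} (f : S → Bool → S) (s₀ : S) (F : Set S) (X : ℕ → Bool) : Prop :=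
  ∃ᶠ n in atTop, run f s₀ X n ∈ F

/-- A language is regular if it is accepted by a DFA with finitely many states. -/
def Regular {A : Type} (L : Set (List A)) : Prop :=
  ∃ (S : Type) (_ : Fintype S) (f : S → A → S) (s₀ : S) (F : Set S),
    L = {w | act f s₀ w ∈ F}

/-- The convolution of two words. -/
def conv (x i : List Bool) : List (Option Bool × Option Bool) :=
  (List.range (max x.length i.length)).map (fun k => (x[k]?, i[k]?))

/-- `(I, U)` is an automatic family. -/
def IsAutomaticFamily (I : Set (List Bool)) (U : List Bool → Set (List Bool)) : Prop :=
  Regular I ∧ Regular {c | ∃ i ∈ I, ∃ x ∈ U i, c = conv x i}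

/-- `(I, U)` is an automatic randomness test (ART). -/
def IsART (I : Set (List Bool)) (U : List Bool → Set (List Bool)) : Prop :=
  IsAutomaticFamily I U ∧ ∀ ε : ENNReal, 0 < ε → ∃ i ∈ I, mu (cyl (U i)) ≤ ε

/-- `(I, U)` is a Martin-Löf automatic randomness test (MART). -/
def IsMART (I : Set (List Bool)) (U : List Bool → Set (List Bool)) : Prop :=
  IsAutomaticFamily I U ∧ I.Infinite ∧
    ∀ i ∈ I, mu (cyl (U i)) ≤ (2 : ENNReal) ^ (-(i.length : ℤ))

/-- The covering region `F(I, U)` of a test. -/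
def coverRegion (I : Set (List Bool)) (U : List Bool → Set (List Bool)) : Set (ℕ → Bool) :=
  ⋂ i ∈ I, cyl (U i)

/-- The segment of `X` of length `j` starting at position `m`. -/
private def Xseg (X : ℕ → Bool) (m j : ℕ) : List Bool :=
  (List.range j).map fun k => X (m + k)

private lemma Xseg_length (X : ℕ → Bool) (m j : ℕ) : (Xseg X m j).length = j := by
  simp [Xseg]

private lemma Xseg_getD (X : ℕ → Bool) (m j k : ℕ) (hk : k < j) :
    (Xseg X m j).getD k false = X (m + k) := by
  rw [List.getD_eq_getElem _ _ (by simpa [Xseg_length] using hk)]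
  simp [Xseg]

private lemma act_append {S : Type*} (f : S → Bool → S) (s : S) (u v : List Bool) :
    act f s (u ++ v) = act f (act f s u) v := by
  simp [act, List.foldl_append]

private lemma run_of_occ {S : Type*} (f : S → Bool → S) (s₀ : S) (X : ℕ → Bool)
    (v : List Bool) : ∀ m, (∀ k < v.length, X (m + k) = v.getD k false) →
      run f s₀ X (m + v.length) = act f (run f s₀ X m) v := by
  induction v with
  | nil => intro m _; simp [act]
  | cons b v ih =>
    intro m hv
    have hb : X m = b := by simpa using hv 0 (by simp)
    have h' : ∀ k < v.length, X (m + 1 + k) = v.getD k false := by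
      intro k hk
      have := hv (k + 1) (by simpa using Nat.succ_lt_succ hk)
      simpa [Nat.add_comm, Nat.add_assoc, Nat.add_left_comm] using this
    have hrun1 : run f s₀ X (m + 1) = f (run f s₀ X m) b := by
      rw [show run f s₀ X (m + 1) = f (run f s₀ X m) (X m) from rfl, hb]
    have : run f s₀ X (m + 1 + v.length) = act f (run f s₀ X m) (b :: v) := by
      rw [ih (m + 1) h', hrun1]; rfl
    rw [show m + (b :: v).length = m + 1 + v.length by simp; omega, this]

private lemma run_add {S : Type*} (f : S → Bool → S) (s₀ : S) (X : ℕ → Bool) (m j : ℕ) :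
    run f s₀ X (m + j) = act f (run f s₀ X m) (Xseg X m j) := by
  have := run_of_occ f s₀ X (Xseg X m j) m
    (fun k hk => (Xseg_getD X m j k (by rwa [Xseg_length] at hk)).symm)
  rwa [Xseg_length] at this

private lemma exists_infOcc {S : Type} [Fintype S] (f : S → Bool → S) (s₀ : S)
    (X : ℕ → Bool) : ∃ s : S, s ∈ InfOcc f s₀ X := by
  by_contra h
  push_neg at h
  have h' : ∀ s : S, ∀ᶠ n in atTop, run f s₀ X n ≠ s := by
    intro s
    have := h s
    simpa [InfOcc, Filter.not_frequently] using this
  have : ∀ᶠ n in atTop, ∀ s : S, run f s₀ X n ≠ s := Filter.eventually_all.2 h'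
  obtain ⟨n, hn⟩ := this.exists
  exact hn (run f s₀ X n) rfl

private lemma eventually_mem_infOcc {S : Type} [Fintype S] (f : S → Bool → S) (s₀ : S)
    (X : ℕ → Bool) : ∃ N, ∀ n ≥ N, run f s₀ X n ∈ InfOcc f s₀ X := by
  have h' : ∀ s : S, ∀ᶠ n in atTop, s ∉ InfOcc f s₀ X → run f s₀ X n ≠ s := by
    intro s
    by_cases hs : s ∈ InfOcc f s₀ X
    · exact Filter.Eventually.of_forall fun n h => absurd hs h
    · have : ¬ ∃ᶠ n in atTop, run f s₀ X n = s := hs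
      rw [Filter.not_frequently] at this
      exact this.mono fun n hn _ => hn
  have : ∀ᶠ n in atTop, ∀ s : S, s ∉ InfOcc f s₀ X → run f s₀ X n ≠ s :=
    Filter.eventually_all.2 h'
  obtain ⟨N, hN⟩ := Filter.eventually_atTop.1 this
  refine ⟨N, fun n hn => ?_⟩
  by_contra hC
  exact hN n hn (run f s₀ X n) hC rfl

private lemma reach_of_infOcc {S : Type} [Fintype S] (f : S → Bool → S) (s₀ : S)
    (X : ℕ → Bool) (s t : S) (hs : s ∈ InfOcc f s₀ X) (ht : t ∈ InfOcc f s₀ X) :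
    Reach f s t := by
  obtain ⟨n₁, -, hn₁⟩ := Filter.frequently_atTop.1 hs 0
  obtain ⟨n₂, hge, hn₂⟩ := Filter.frequently_atTop.1 ht n₁
  refine ⟨Xseg X n₁ (n₂ - n₁), ?_⟩
  have := run_add f s₀ X n₁ (n₂ - n₁)
  rw [Nat.add_sub_cancel' hge, hn₁, hn₂] at this
  exact this.symm

private lemma occurs_ge (X : ℕ → Bool) (hX : Disjunctive X) (w : List Bool) (M : ℕ) :
    ∃ m ≥ M, ∀ k < w.length, X (m + k) = w.getD k false := by
  obtain ⟨n, hn⟩ := hX (Xseg X 0 M ++ w)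
  refine ⟨n + M, Nat.le_add_left _ _, fun k hk => ?_⟩
  have h1 := hn (M + k) (by simp [Xseg_length]; omega)
  rw [List.getD_append_right _ _ _ _ (by simp [Xseg_length])] at h1
  simp only [Xseg_length, Nat.add_sub_cancel_left] at h1
  rw [← h1]
  ring_nf

private lemma infOcc_closed {S : Type} [Fintype S] (f : S → Bool → S) (s₀ : S)
    (X : ℕ → Bool) (hX : Disjunctive X) (q : S) (hq : q ∈ InfOcc f s₀ X)
    (w : List Bool) : act f q w ∈ InfOcc f s₀ X := by
  classical
  obtain ⟨N, hN⟩ := eventually_mem_infOcc f s₀ X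
  have ha : ∀ p : S, ∃ u : List Bool, p ∈ InfOcc f s₀ X → act f p u = q := by
    intro p
    by_cases hp : p ∈ InfOcc f s₀ X
    · obtain ⟨u, hu⟩ := reach_of_infOcc f s₀ X p q hp hq
      exact ⟨u, fun _ => hu⟩
    · exact ⟨[], fun h => absurd h hp⟩
  choose a haq using ha
  set step : List Bool → S → List Bool := fun acc p =>
    acc ++ (if act f p acc ∈ InfOcc f s₀ X then a (act f p acc) ++ w else []) with hstepdef
  have hpre : ∀ (l : List S) (acc : List Bool), acc <+: List.foldl step acc l := by
    intro l
    induction l with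
    | nil => intro acc; exact List.prefix_rfl
    | cons p l ih =>
      intro acc
      rw [List.foldl_cons]
      exact (List.prefix_append acc _).trans (ih (step acc p))
  have main : ∀ (l : List S) (acc : List Bool) (m : ℕ), N ≤ m →
      (∀ k < (List.foldl step acc l).length,
        X (m + k) = (List.foldl step acc l).getD k false) →
      run f s₀ X m ∈ l →
      ∃ j, run f s₀ X (m + j) = act f q w := by
    intro l
    induction l with
    | nil => intro acc m _ _ h; simp at h
    | cons p l ih =>
      intro acc m hm hocc hmem
      rw [List.foldl_cons] at hocc
      rcases List.mem_cons.1 hmem with hp | hp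
      · -- the run is at `p` at time `m`
        have hoccpre : ∀ (u : List Bool), u <+: List.foldl step (step acc p) l →
            ∀ k < u.length, X (m + k) = u.getD k false := by
          intro u hu k hk
          have hlen : k < (List.foldl step (step acc p) l).length :=
            lt_of_lt_of_le hk hu.length_le
          rw [hocc k hlen, List.getD_eq_getElem _ _ hlen, List.getD_eq_getElem _ _ hk]
          exact (hu.getElem hk).symm
        have hpre2 : step acc p <+: List.foldl step (step acc p) l := hpre l _
        have haccpre : acc <+: List.foldl step (step acc p) l :=
          (List.prefix_append acc _).trans hpre2
        have hrun_acc : run f s₀ X (m + acc.length) = act f p acc := by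
          rw [run_of_occ f s₀ X acc m (hoccpre acc haccpre), hp]
        have hc : act f p acc ∈ InfOcc f s₀ X := by
          rw [← hrun_acc]
          exact hN _ (le_trans hm (Nat.le_add_right _ _))
        have hstep : step acc p = acc ++ (a (act f p acc) ++ w) := by
          simp [hstepdef, if_pos hc]
        have hoccfull : ∀ k < (acc ++ (a (act f p acc) ++ w)).length,
            X (m + k) = (acc ++ (a (act f p acc) ++ w)).getD k false :=
          hoccpre _ (hstep ▸ hpre2)
        have hrunfull := run_of_occ f s₀ X (acc ++ (a (act f p acc) ++ w)) m hoccfull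
        refine ⟨(acc ++ (a (act f p acc) ++ w)).length, ?_⟩
        rw [hrunfull, hp, act_append, act_append, haq _ hc]
      · exact ih (step acc p) m hm hocc hp
  obtain ⟨m, hmge, hocc⟩ := occurs_ge X hX
    (List.foldl step [] (Finset.univ : Finset S).toList) N
  obtain ⟨j, hj⟩ := main (Finset.univ : Finset S).toList [] m hmge hocc
    (Finset.mem_toList.2 (Finset.mem_univ _))
  rw [← hj]
  exact hN _ (le_trans hmge (Nat.le_add_right _ _))

/-- For a disjunctive sequence, the set of states visited infinitely
often equals some leaf connected component. -/
theorem stmt5 {S : Type} [Fintype S] (f : S → Bool → S) (s₀ : S)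
    (hreach : ∀ s : S, Reach f s₀ s) (X : ℕ → Bool) (hX : Disjunctive X) :
    ∃ g : Set S, IsLeafComponent f g ∧ InfOcc f s₀ X = g := by
  obtain ⟨q, hq⟩ := exists_infOcc f s₀ X
  refine ⟨component f q, ⟨⟨q, rfl⟩, ?_⟩, ?_⟩
  · intro s hs t hst
    obtain ⟨u, hu⟩ := hs.1
    have hsC : s ∈ InfOcc f s₀ X := hu ▸ infOcc_closed f s₀ X hX q hq u
    obtain ⟨v, hv⟩ := hst
    have htC : t ∈ InfOcc f s₀ X := hv ▸ infOcc_closed f s₀ X hX s hsC v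
    exact reach_of_infOcc f s₀ X t s htC hsC
  · ext t
    constructor
    · intro ht
      exact ⟨reach_of_infOcc f s₀ X q t hq ht, reach_of_infOcc f s₀ X t q ht hq⟩
    · rintro ⟨⟨u, hu⟩, -⟩
      exact hu ▸ infOcc_closed f s₀ X hX q hq u
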